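/- arXiv:2501.15307 — 4 statements merged into one kernel-verified Lean document; each statement's English description precedes it below -/
import Mathlib

section
/- Suppose the symmetric positive semidefinite block matrix V (with blocks V_ββ, V_βγ, V_γβ, V_γγ) satisfies both compatibility conditions V_βγ(I − V_γγ⁺V_γγ) = 0 and (I − S S⁺)V_βγ = 0 where S = V_ββ − V_βγ V_γγ⁺ V_γβ. Then the Moore–Penrose inverse of V equals L · diag(S⁺, V_γγ⁺) · Lᵀ, where L is the block lower-unitriangular matrix with (2,1)-block −V_γγ⁺ V_γβ. -/
open Matrix

/-- The four Penrose conditions characterizing the Moore–Penrose pseudoinverse. -/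
def IsMoorePenrose {m n : Type*} [Fintype m] [Fintype n]
    (A : Matrix m n ℝ) (B : Matrix n m ℝ) : Prop :=
  A * B * A = A ∧ B * A * B = B ∧ (A * B)ᵀ = A * B ∧ (B * A)ᵀ = B * A

lemma mp_unique {m n : Type*} [Fintype m] [Fintype n]
    {A : Matrix m n ℝ} {B C : Matrix n m ℝ}
    (hB : IsMoorePenrose A B) (hC : IsMoorePenrose A C) : B = C := by
  obtain ⟨hB1, hB2, hB3, hB4⟩ := hB
  obtain ⟨hC1, hC2, hC3, hC4⟩ := hC
  have hAB : A * B = A * C := by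
    calc A * B = (A * B)ᵀ := hB3.symm
    _ = Bᵀ * (A * C * A)ᵀ := by rw [transpose_mul, hC1]
    _ = Bᵀ * Aᵀ * (A * C)ᵀ := by
        simp only [transpose_mul, Matrix.mul_assoc]
    _ = (A * B)ᵀ * (A * C) := by rw [hC3, transpose_mul]
    _ = A * B * (A * C) := by rw [hB3]
    _ = (A * B * A) * C := by simp only [Matrix.mul_assoc]
    _ = A * C := by rw [hB1]
  have hBA : B * A = C * A := by
    calc B * A = (B * A)ᵀ := hB4.symm
    _ = (A * C * A)ᵀ * Bᵀ := by rw [transpose_mul, hC1]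
    _ = (C * A)ᵀ * (Aᵀ * Bᵀ) := by
        simp only [transpose_mul, Matrix.mul_assoc]
    _ = (C * A) * (B * A)ᵀ := by rw [hC4, transpose_mul]
    _ = C * A * (B * A) := by rw [hB4]
    _ = C * (A * B * A) := by simp only [Matrix.mul_assoc]
    _ = C * A := by rw [hB1]
  calc B = B * A * B := hB2.symm
  _ = B * (A * C) := by rw [Matrix.mul_assoc, hAB]
  _ = (B * A) * C := by rw [Matrix.mul_assoc]
  _ = C * A * C := by rw [hBA]
  _ = C := hC2

lemma mp_symm {n : Type*} [Fintype n] {A B : Matrix n n ℝ}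
    (hA : Aᵀ = A) (hB : IsMoorePenrose A B) : Bᵀ = B := by
  obtain ⟨h1, h2, h3, h4⟩ := hB
  have : IsMoorePenrose A Bᵀ := by
    refine ⟨?_, ?_, ?_, ?_⟩
    · calc A * Bᵀ * A = (Aᵀ * B * Aᵀ)ᵀ := by
            simp [transpose_mul, Matrix.mul_assoc]
      _ = A := by rw [hA, h1, hA]
    · calc Bᵀ * A * Bᵀ = (B * Aᵀ * B)ᵀ := by
            simp [transpose_mul, Matrix.mul_assoc]
      _ = Bᵀ := by rw [hA, h2]
    · have he : A * Bᵀ = B * A := by rw [← hA, ← transpose_mul, h4, hA]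
      rw [he, h4]
    · have he : Bᵀ * A = A * B := by rw [← hA, ← transpose_mul, h3, hA]
      rw [he, h3]
  exact mp_unique this ⟨h1, h2, h3, h4⟩

/-- Under the two compatibility conditions, the Moore–Penrose inverse of a
positive semidefinite symmetric block matrix `V` is
`L · diag(S⁺, V_γγ⁺) · Lᵀ` with `L` block lower-unitriangular with
`(2,1)`-block `−V_γγ⁺ V_γβ`, where `S` is the generalized Schur complement. -/
theorem psd_block_moore_penrose_formula {p q : ℕ}
    (Vbb : Matrix (Fin p) (Fin p) ℝ) (Vbg : Matrix (Fin p) (Fin q) ℝ)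
    (Vgg Vggp : Matrix (Fin q) (Fin q) ℝ)
    (Sp : Matrix (Fin p) (Fin p) ℝ)
    (hV : (Matrix.fromBlocks Vbb Vbg Vbgᵀ Vgg).PosSemidef)
    (hMPg : IsMoorePenrose Vgg Vggp)
    (hMPS : IsMoorePenrose (Vbb - Vbg * Vggp * Vbgᵀ) Sp)
    (hcompat1 : Vbg * (1 - Vggp * Vgg) = 0)
    (hcompat2 : (1 - (Vbb - Vbg * Vggp * Vbgᵀ) * Sp) * Vbg = 0) :
    IsMoorePenrose (Matrix.fromBlocks Vbb Vbg Vbgᵀ Vgg)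
      (Matrix.fromBlocks 1 0 (-(Vggp * Vbgᵀ)) 1 *
        Matrix.fromBlocks Sp 0 0 Vggp *
        (Matrix.fromBlocks 1 0 (-(Vggp * Vbgᵀ)) 1)ᵀ) := by
  unfold IsMoorePenrose
  -- symmetry of the full matrix and of the blocks
  have hVt : (Matrix.fromBlocks Vbb Vbg Vbgᵀ Vgg)ᵀ
      = Matrix.fromBlocks Vbb Vbg Vbgᵀ Vgg := by
    have h := hV.1
    rw [Matrix.IsHermitian, Matrix.conjTranspose] at h
    simpa [show ⇑(starRingEnd ℝ) = id from funext fun x => conj_trivial x] using h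
  obtain ⟨hVbb, hVgg⟩ : Vbbᵀ = Vbb ∧ Vggᵀ = Vgg := by
    have h := hVt
    rw [Matrix.fromBlocks_transpose, Matrix.fromBlocks_inj] at h
    exact ⟨h.1, h.2.2.2⟩
  set S : Matrix (Fin p) (Fin p) ℝ := Vbb - Vbg * Vggp * Vbgᵀ with hSdef
  obtain ⟨g1, g2, g3, g4⟩ := hMPg
  obtain ⟨s1, s2, s3, s4⟩ := hMPS
  have hVggp : Vggpᵀ = Vggp := mp_symm hVgg ⟨g1, g2, g3, g4⟩
  have hSsym : Sᵀ = S := by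
    rw [hSdef, transpose_sub, hVbb, transpose_mul, transpose_mul, hVggp,
      transpose_transpose, Matrix.mul_assoc]
  have hSp : Spᵀ = Sp := mp_symm hSsym ⟨s1, s2, s3, s4⟩
  have g2' : Vggp * (Vgg * Vggp) = Vggp := by
    simpa [Matrix.mul_assoc] using g2
  have s2' : Sp * (S * Sp) = Sp := by
    simpa [Matrix.mul_assoc] using s2
  -- compatibility consequences
  have h1 : Vbg * Vggp * Vgg = Vbg := by
    have h := hcompat1
    rw [Matrix.mul_sub, Matrix.mul_one, sub_eq_zero] at h
    rw [Matrix.mul_assoc, ← h]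
  have h1' : Vgg * (Vggp * Vbgᵀ) = Vbgᵀ := by
    have h := congrArg Matrix.transpose h1
    simpa [transpose_mul, hVgg, hVggp, Matrix.mul_assoc] using h
  have h2 : S * Sp * Vbg = Vbg := by
    have h := hcompat2
    rw [Matrix.sub_mul, Matrix.one_mul, sub_eq_zero] at h
    exact h.symm
  have hVbbS : Vbb = S + Vbg * Vggp * Vbgᵀ := by
    rw [hSdef]; abel
  -- the explicit form of the candidate inverse
  set B : Matrix (Fin p ⊕ Fin q) (Fin p ⊕ Fin q) ℝ :=
    Matrix.fromBlocks 1 0 (-(Vggp * Vbgᵀ)) 1 *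
      Matrix.fromBlocks Sp 0 0 Vggp *
      (Matrix.fromBlocks 1 0 (-(Vggp * Vbgᵀ)) 1)ᵀ with hBdef
  have hB : B = Matrix.fromBlocks Sp (Sp * -(Vbg * Vggp))
      (-(Vggp * Vbgᵀ) * Sp)
      (-(Vggp * Vbgᵀ) * (Sp * -(Vbg * Vggp)) + Vggp) := by
    rw [hBdef, Matrix.fromBlocks_transpose, Matrix.fromBlocks_multiply,
      Matrix.fromBlocks_multiply]
    simp [hVggp, transpose_mul, Matrix.mul_assoc]
  have hBsym : Bᵀ = B := by
    rw [hBdef]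
    simp only [transpose_mul, transpose_transpose, Matrix.fromBlocks_transpose,
      hSp, hVggp, transpose_zero, transpose_one, transpose_neg]
    simp [Matrix.mul_assoc]
  -- the key product computation
  have hVB : Matrix.fromBlocks Vbb Vbg Vbgᵀ Vgg * B
      = Matrix.fromBlocks (S * Sp) 0 0 (Vgg * Vggp) := by
    rw [hB, Matrix.fromBlocks_multiply, Matrix.fromBlocks_inj]
    refine ⟨?_, ?_, ?_, ?_⟩ <;>
      simp only [Matrix.neg_mul, Matrix.mul_neg, Matrix.mul_add, Matrix.add_mul,
        Matrix.mul_assoc, neg_neg, Matrix.mul_one, Matrix.one_mul]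
    · rw [hSdef, Matrix.sub_mul, sub_eq_add_neg]
      simp only [Matrix.mul_assoc]
    · have e : Vbb * (Sp * (Vbg * Vggp))
          - Vbg * (Vggp * (Vbgᵀ * (Sp * (Vbg * Vggp)))) = Vbg * Vggp := by
        have h := congrArg (fun M => M * Vggp) h2
        rw [hSdef] at h
        simpa only [Matrix.sub_mul, Matrix.mul_assoc] using h
      rw [sub_eq_iff_eq_add.mp e]; abel
    · have e := congrArg (fun M => M * Sp) h1'
      simp only [Matrix.mul_assoc] at e
      rw [e]; abel
    · have e := congrArg (fun M => M * (Sp * (Vbg * Vggp))) h1'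
      simp only [Matrix.mul_assoc] at e
      rw [e]; abel
  have hBV : B * Matrix.fromBlocks Vbb Vbg Vbgᵀ Vgg
      = Matrix.fromBlocks (S * Sp) 0 0 (Vgg * Vggp) := by
    calc B * Matrix.fromBlocks Vbb Vbg Vbgᵀ Vgg
        = ((Matrix.fromBlocks Vbb Vbg Vbgᵀ Vgg)ᵀ * Bᵀ)ᵀ := by
          simp [transpose_mul]
    _ = (Matrix.fromBlocks Vbb Vbg Vbgᵀ Vgg * B)ᵀ := by rw [hVt, hBsym]
    _ = _ := by
        rw [hVB, Matrix.fromBlocks_transpose, s3, g3]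
        simp
  refine ⟨?_, ?_, ?_, ?_⟩
  · -- V * B * V = V
    rw [hVB, Matrix.fromBlocks_multiply, Matrix.fromBlocks_inj]
    refine ⟨?_, ?_, ?_, ?_⟩ <;>
      simp only [Matrix.zero_mul, Matrix.mul_zero, add_zero, zero_add]
    · rw [hVbbS, Matrix.mul_add]
      simp only [← Matrix.mul_assoc]
      rw [s1, h2]
    · exact h2
    · simpa [Matrix.mul_assoc] using h1'
    · exact g1
  · -- B * V * B = B
    rw [Matrix.mul_assoc, hVB]
    conv_lhs => rw [hB]
    conv_rhs => rw [hB]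
    rw [Matrix.fromBlocks_multiply, Matrix.fromBlocks_inj]
    refine ⟨?_, ?_, ?_, ?_⟩ <;>
      simp only [Matrix.zero_mul, Matrix.mul_zero, add_zero, zero_add]
    · simpa [Matrix.mul_assoc] using s2
    · simp only [Matrix.neg_mul, Matrix.mul_neg, Matrix.mul_assoc, g2']
    · simp only [Matrix.neg_mul, Matrix.mul_neg, Matrix.mul_assoc, s2']
    · simp only [Matrix.add_mul, Matrix.neg_mul, Matrix.mul_neg,
        Matrix.mul_assoc, g2']
  · rw [hVB, Matrix.fromBlocks_transpose, s3, g3]; simp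
  · rw [hBV, Matrix.fromBlocks_transpose, s3, g3]; simp
end

section
/- Let V_νν be a positive semidefinite symmetric matrix with blocks V_ββ, V_βγ, V_γβ, V_γγ satisfying the compatibility conditions, and let D = E[∂m/∂ν] have block structure with D_βγ-block arbitrary and D_γβ = 0 (i.e., ⟨∂_β m_γ⟩ = 0). Suppose the locally-robust condition D_βγ − V_βγ V_γγ⁺ D_γγ = 0 holds, where D_βγ = E[∂_γ m_β] and D_γγ = E[∂_γ m_γ]. Then the matrix Dᵀ V_νν⁺ D is block diagonal: Dᵀ V_νν⁺ D = diag(D_ββᵀ S⁺ D_ββ, D_γγᵀ V_γγ⁺ D_γγ), where S = V_ββ − V_βγ V_γγ⁺ V_γβ and D_ββ = E[∂_β m_β]. -/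
open Matrix

lemma mp_transpose {m n : Type*} [Fintype m] [Fintype n]
    {A : Matrix m n ℝ} {B : Matrix n m ℝ} (h : IsMoorePenrose A B) :
    IsMoorePenrose Aᵀ Bᵀ := by
  obtain ⟨h1, h2, h3, h4⟩ := h
  refine ⟨?_, ?_, ?_, ?_⟩
  · simpa [Matrix.mul_assoc] using congrArg Matrix.transpose h1
  · simpa [Matrix.mul_assoc] using congrArg Matrix.transpose h2
  · rw [← transpose_mul, transpose_transpose, h4]
  · rw [← transpose_mul, transpose_transpose, h3]

/-- Under local robustness `D_βγ = V_βγ V_γγ⁺ D_γγ` (and `D_γβ = 0`),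
the optimal joint information matrix `Dᵀ V⁺ D` is block diagonal:
`diag(D_ββᵀ S⁺ D_ββ, D_γγᵀ V_γγ⁺ D_γγ)`. -/
theorem joint_information_block_diagonal {a b p q : ℕ}
    (Vbb : Matrix (Fin a) (Fin a) ℝ) (Vbg : Matrix (Fin a) (Fin b) ℝ)
    (Vgg Vggp : Matrix (Fin b) (Fin b) ℝ)
    (Sp : Matrix (Fin a) (Fin a) ℝ)
    (Dbb : Matrix (Fin a) (Fin p) ℝ) (Dbg : Matrix (Fin a) (Fin q) ℝ)
    (Dgg : Matrix (Fin b) (Fin q) ℝ)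
    (Vp : Matrix (Fin a ⊕ Fin b) (Fin a ⊕ Fin b) ℝ)
    (hV : (Matrix.fromBlocks Vbb Vbg Vbgᵀ Vgg).PosSemidef)
    (hMPg : IsMoorePenrose Vgg Vggp)
    (hMPS : IsMoorePenrose (Vbb - Vbg * Vggp * Vbgᵀ) Sp)
    (hcompat1 : Vbg * (1 - Vggp * Vgg) = 0)
    (hcompat2 : (1 - (Vbb - Vbg * Vggp * Vbgᵀ) * Sp) * Vbg = 0)
    (hMPV : IsMoorePenrose (Matrix.fromBlocks Vbb Vbg Vbgᵀ Vgg) Vp)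
    (hLR : Dbg - Vbg * Vggp * Dgg = 0) :
    (Matrix.fromBlocks Dbb Dbg 0 Dgg)ᵀ * Vp * Matrix.fromBlocks Dbb Dbg 0 Dgg =
      Matrix.fromBlocks (Dbbᵀ * Sp * Dbb) 0 0 (Dggᵀ * Vggp * Dgg) := by
  set S : Matrix (Fin a) (Fin a) ℝ := Vbb - Vbg * Vggp * Vbgᵀ with hSdef
  -- symmetry of the blocks
  have hVsym : (fromBlocks Vbb Vbg Vbgᵀ Vgg)ᵀ = fromBlocks Vbb Vbg Vbgᵀ Vgg := by
    have h := hV.1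
    rwa [Matrix.IsHermitian, conjTranspose_eq_transpose_of_trivial] at h
  rw [fromBlocks_transpose] at hVsym
  have hVbbsym : Vbbᵀ = Vbb := by
    simpa using congrArg Matrix.toBlocks₁₁ hVsym
  have hGsym : Vggᵀ = Vgg := by
    simpa using congrArg Matrix.toBlocks₂₂ hVsym
  have hGpsym : Vggpᵀ = Vggp := by
    have h := mp_transpose hMPg
    rw [hGsym] at h
    exact mp_unique h hMPg
  have hSsym : Sᵀ = S := by
    rw [hSdef, transpose_sub, hVbbsym, transpose_mul, transpose_mul,
      transpose_transpose, hGpsym, Matrix.mul_assoc]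
  have hSpsym : Spᵀ = Sp := by
    have h := mp_transpose hMPS
    rw [hSsym] at h
    exact mp_unique h hMPS
  -- commutation
  have hGcomm : Vgg * Vggp = Vggp * Vgg := by
    have h := hMPg.2.2.2
    rwa [transpose_mul, hGsym, hGpsym] at h
  have hScomm : S * Sp = Sp * S := by
    have h := hMPS.2.2.2
    rwa [transpose_mul, hSsym, hSpsym] at h
  -- compatibility relations
  have c1 : Vbg * Vggp * Vgg = Vbg := by
    have h := hcompat1
    rw [Matrix.mul_sub, Matrix.mul_one, sub_eq_zero, ← Matrix.mul_assoc] at h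
    exact h.symm
  have c1' : Vbg * Vgg * Vggp = Vbg := by
    rw [Matrix.mul_assoc, hGcomm, ← Matrix.mul_assoc, c1]
  have ct1 : Vgg * Vggp * Vbgᵀ = Vbgᵀ := by
    have h := congrArg Matrix.transpose c1
    rwa [transpose_mul, transpose_mul, hGsym, hGpsym, ← Matrix.mul_assoc] at h
  have ct1' : Vggp * Vgg * Vbgᵀ = Vbgᵀ := by rw [← hGcomm, ct1]
  have c2 : S * Sp * Vbg = Vbg := by
    have h := hcompat2
    rw [Matrix.sub_mul, Matrix.one_mul, sub_eq_zero] at h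
    exact h.symm
  have c2' : Sp * S * Vbg = Vbg := by rw [← hScomm, c2]
  have ct2 : Vbgᵀ * Sp * S = Vbgᵀ := by
    have h := congrArg Matrix.transpose c2
    rwa [transpose_mul, transpose_mul, hSsym, hSpsym, ← Matrix.mul_assoc] at h
  -- Penrose products
  have hGGpG : Vgg * Vggp * Vgg = Vgg := hMPg.1
  have hGpGGp : Vggp * Vgg * Vggp = Vggp := hMPg.2.1
  have hSSpS : S * Sp * S = S := hMPS.1
  have hSpSSp : Sp * S * Sp = Sp := hMPS.2.1
  -- right-associated generalized facts
  have g1 : ∀ {k : ℕ} (X : Matrix (Fin b) (Fin k) ℝ),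
      Vbg * (Vggp * (Vgg * X)) = Vbg * X := fun X => by
    rw [← Matrix.mul_assoc, ← Matrix.mul_assoc, c1]
  have g3 : ∀ {k : ℕ} (X : Matrix (Fin a) (Fin k) ℝ),
      Vgg * (Vggp * (Vbgᵀ * X)) = Vbgᵀ * X := fun X => by
    rw [← Matrix.mul_assoc, ← Matrix.mul_assoc, ct1]
  have g4 : ∀ {k : ℕ} (X : Matrix (Fin a) (Fin k) ℝ),
      Vggp * (Vgg * (Vbgᵀ * X)) = Vbgᵀ * X := fun X => by
    rw [← Matrix.mul_assoc, ← Matrix.mul_assoc, ct1']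
  have g5 : ∀ {k : ℕ} (X : Matrix (Fin b) (Fin k) ℝ),
      S * (Sp * (Vbg * X)) = Vbg * X := fun X => by
    rw [← Matrix.mul_assoc, ← Matrix.mul_assoc, c2]
  have g6 : ∀ {k : ℕ} (X : Matrix (Fin b) (Fin k) ℝ),
      Sp * (S * (Vbg * X)) = Vbg * X := fun X => by
    rw [← Matrix.mul_assoc, ← Matrix.mul_assoc, c2']
  have g7 : ∀ {k : ℕ} (X : Matrix (Fin a) (Fin k) ℝ),
      Vbgᵀ * (Sp * (S * X)) = Vbgᵀ * X := fun X => by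
    rw [← Matrix.mul_assoc, ← Matrix.mul_assoc, ct2]
  have g9 : ∀ {k : ℕ} (X : Matrix (Fin b) (Fin k) ℝ),
      Vgg * (Vggp * (Vgg * X)) = Vgg * X := fun X => by
    rw [← Matrix.mul_assoc, ← Matrix.mul_assoc, hGGpG]
  have g10 : ∀ {k : ℕ} (X : Matrix (Fin b) (Fin k) ℝ),
      Vggp * (Vgg * (Vggp * X)) = Vggp * X := fun X => by
    rw [← Matrix.mul_assoc, ← Matrix.mul_assoc, hGpGGp]
  have g11 : ∀ {k : ℕ} (X : Matrix (Fin a) (Fin k) ℝ),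
      S * (Sp * (S * X)) = S * X := fun X => by
    rw [← Matrix.mul_assoc, ← Matrix.mul_assoc, hSSpS]
  have g12 : ∀ {k : ℕ} (X : Matrix (Fin a) (Fin k) ℝ),
      Sp * (S * (Sp * X)) = Sp * X := fun X => by
    rw [← Matrix.mul_assoc, ← Matrix.mul_assoc, hSpSSp]
  -- tail-less right-associated facts
  have r1 : Vbg * (Vggp * Vgg) = Vbg := by rw [← Matrix.mul_assoc, c1]
  have r2 : Vbg * (Vgg * Vggp) = Vbg := by rw [← Matrix.mul_assoc, c1']
  have r3 : Vgg * (Vggp * Vbgᵀ) = Vbgᵀ := by rw [← Matrix.mul_assoc, ct1]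
  have r4 : Vggp * (Vgg * Vbgᵀ) = Vbgᵀ := by rw [← Matrix.mul_assoc, ct1']
  have r5 : S * (Sp * Vbg) = Vbg := by rw [← Matrix.mul_assoc, c2]
  have r6 : Sp * (S * Vbg) = Vbg := by rw [← Matrix.mul_assoc, c2']
  have r7 : Vbgᵀ * (Sp * S) = Vbgᵀ := by rw [← Matrix.mul_assoc, ct2]
  have r9 : Vgg * (Vggp * Vgg) = Vgg := by rw [← Matrix.mul_assoc, hGGpG]
  have r10 : Vggp * (Vgg * Vggp) = Vggp := by rw [← Matrix.mul_assoc, hGpGGp]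
  have r11 : S * (Sp * S) = S := by rw [← Matrix.mul_assoc, hSSpS]
  have r12 : Sp * (S * Sp) = Sp := by rw [← Matrix.mul_assoc, hSpSSp]
  have hVbb : Vbb = S + Vbg * Vggp * Vbgᵀ := by rw [hSdef]; abel
  -- the candidate pseudoinverse
  set W : Matrix (Fin a ⊕ Fin b) (Fin a ⊕ Fin b) ℝ :=
    fromBlocks Sp (-(Sp * Vbg * Vggp)) (-(Vggp * Vbgᵀ * Sp))
      (Vggp + Vggp * Vbgᵀ * Sp * Vbg * Vggp) with hWdef
  have hVW : (fromBlocks Vbb Vbg Vbgᵀ Vgg) * W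
      = fromBlocks (S * Sp) 0 0 (Vgg * Vggp) := by
    rw [hWdef, fromBlocks_multiply, hVbb, fromBlocks_inj]
    refine ⟨?_, ?_, ?_, ?_⟩ <;>
    · simp only [Matrix.mul_add, Matrix.add_mul, Matrix.mul_neg, Matrix.neg_mul,
        Matrix.mul_sub, Matrix.sub_mul, Matrix.mul_assoc,
        g1, g3, g4, g5, g6, g7, g9, g10, g11, g12,
        r1, r2, r3, r4, r5, r6, r7, r9, r10, r11, r12]
      abel
  have hWV : W * (fromBlocks Vbb Vbg Vbgᵀ Vgg)
      = fromBlocks (Sp * S) 0 0 (Vggp * Vgg) := by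
    rw [hWdef, fromBlocks_multiply, hVbb, fromBlocks_inj]
    refine ⟨?_, ?_, ?_, ?_⟩ <;>
    · simp only [Matrix.mul_add, Matrix.add_mul, Matrix.mul_neg, Matrix.neg_mul,
        Matrix.mul_sub, Matrix.sub_mul, Matrix.mul_assoc,
        g1, g3, g4, g5, g6, g7, g9, g10, g11, g12,
        r1, r2, r3, r4, r5, r6, r7, r9, r10, r11, r12]
      abel
  have hMPW : IsMoorePenrose (fromBlocks Vbb Vbg Vbgᵀ Vgg) W := by
    refine ⟨?_, ?_, ?_, ?_⟩
    · rw [hVW, fromBlocks_multiply, hVbb, fromBlocks_inj]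
      refine ⟨?_, ?_, ?_, ?_⟩ <;>
      · simp only [Matrix.mul_add, Matrix.add_mul, Matrix.mul_neg, Matrix.neg_mul,
          Matrix.mul_sub, Matrix.sub_mul, Matrix.zero_mul, Matrix.mul_zero,
          Matrix.mul_assoc,
          g1, g3, g4, g5, g6, g7, g9, g10, g11, g12,
          r1, r2, r3, r4, r5, r6, r7, r9, r10, r11, r12]
        abel
    · rw [Matrix.mul_assoc, hVW, hWdef, fromBlocks_multiply, fromBlocks_inj]
      refine ⟨?_, ?_, ?_, ?_⟩ <;>
      · simp only [Matrix.mul_add, Matrix.add_mul, Matrix.mul_neg, Matrix.neg_mul,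
          Matrix.mul_sub, Matrix.sub_mul, Matrix.zero_mul, Matrix.mul_zero,
          Matrix.mul_assoc,
          g1, g3, g4, g5, g6, g7, g9, g10, g11, g12,
          r1, r2, r3, r4, r5, r6, r7, r9, r10, r11, r12]
        abel
    · rw [hVW, fromBlocks_transpose, transpose_mul, transpose_mul, hSsym, hSpsym,
        hGsym, hGpsym, transpose_zero, hScomm, hGcomm]
      simp only [Matrix.transpose_zero]
    · rw [hWV, fromBlocks_transpose, transpose_mul, transpose_mul, hSsym, hSpsym,
        hGsym, hGpsym, transpose_zero, hScomm, hGcomm]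
      simp only [Matrix.transpose_zero]
  have hVpW : Vp = W := mp_unique hMPV hMPW
  have hLR' : Dbg = Vbg * Vggp * Dgg := by rwa [sub_eq_zero] at hLR
  have hDbgT : Dbgᵀ = Dggᵀ * Vggp * Vbgᵀ := by
    rw [hLR', transpose_mul, transpose_mul, hGpsym, Matrix.mul_assoc]
  rw [hVpW, hWdef, fromBlocks_transpose, hDbgT, hLR', fromBlocks_multiply,
    fromBlocks_multiply, fromBlocks_inj]
  refine ⟨?_, ?_, ?_, ?_⟩ <;>
  · simp only [Matrix.mul_add, Matrix.add_mul, Matrix.mul_neg, Matrix.neg_mul,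
      Matrix.mul_sub, Matrix.sub_mul, Matrix.zero_mul, Matrix.mul_zero,
      Matrix.transpose_zero, add_zero, zero_add, Matrix.mul_assoc,
      g1, g3, g4, g5, g6, g7, g9, g10, g11, g12,
      r1, r2, r3, r4, r5, r6, r7, r9, r10, r11, r12]
    abel
end

section
/- Let V_γγ⁺ = F Fᵀ be a full-rank factorization of the Moore–Penrose inverse of the psd matrix V_γγ = E[m_γ m_γᵀ] (F has full column rank d_γ), let G = E[∂_γ m_γ] have full column rank, and suppose GᵀF is an invertible d_γ×d_γ matrix. If A := E[∂_γ m_β] satisfies A = V_βγ V_γγ⁺ G, then V_βγ V_γγ⁺ − A (Gᵀ V_γγ⁺ G)⁻¹ Gᵀ V_γγ⁺ annihilates the range of projection onto the column space of V_γγ; in particular (V_βγ V_γγ⁺ − A(GᵀV_γγ⁺G)⁻¹GᵀV_γγ⁺) m_γ = 0 almost surely. -/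
open Matrix MeasureTheory

/-- Cross-covariance matrix `E[f gᵀ]` of two (zero-mean) random vectors. -/
noncomputable def cov {Ω : Type*} [MeasurableSpace Ω] (P : Measure Ω) {a b : ℕ}
    (f : Ω → Fin a → ℝ) (g : Ω → Fin b → ℝ) : Matrix (Fin a) (Fin b) ℝ :=
  Matrix.of fun i j => ∫ ω, f ω i * g ω j ∂P

/-- Scenario (ii) of Lemma `threecases`: with a full-rank factorization
`V_γγ⁺ = F Fᵀ`, `GᵀF` invertible, and `A = V_βγ V_γγ⁺ G`, the matrix
`V_βγV_γγ⁺ − A(GᵀV_γγ⁺G)⁻¹GᵀV_γγ⁺` annihilates the projection onto the column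
space of `V_γγ`; in particular it annihilates `m_γ` almost surely. -/
theorem row_overidentified_Psi_annihilates {Ω : Type*} [MeasurableSpace Ω]
    (P : Measure Ω) [IsProbabilityMeasure P] {a b r : ℕ}
    (mβ : Ω → Fin a → ℝ) (mγ : Ω → Fin b → ℝ)
    (Vggp : Matrix (Fin b) (Fin b) ℝ) (F : Matrix (Fin b) (Fin r) ℝ)
    (G : Matrix (Fin b) (Fin r) ℝ) (A : Matrix (Fin a) (Fin r) ℝ)
    (hγ2 : ∀ j, MemLp (fun ω => mγ ω j) 2 P)
    (hγ0 : ∀ j, ∫ ω, mγ ω j ∂P = 0)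
    (hMP : IsMoorePenrose (cov P mγ mγ) Vggp)
    (hfact : Vggp = F * Fᵀ)
    (hFrank : F.rank = r)
    (hGrank : G.rank = r)
    (hGF : Invertible (Gᵀ * F))
    (hA : A = cov P mβ mγ * Vggp * G)
    (hsupp : ∀ᵐ ω ∂P, (cov P mγ mγ * Vggp).mulVec (mγ ω) = mγ ω) :
    (cov P mβ mγ * Vggp - A * (Gᵀ * Vggp * G)⁻¹ * Gᵀ * Vggp) *
        (cov P mγ mγ * Vggp) = 0 ∧
    ∀ᵐ ω ∂P,
      (cov P mβ mγ * Vggp - A * (Gᵀ * Vggp * G)⁻¹ * Gᵀ * Vggp).mulVec (mγ ω)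
        = 0 := by
  have hdet : IsUnit (Gᵀ * F).det := (Matrix.isUnit_iff_isUnit_det _).mp (isUnit_of_invertible _)
  have hdetT : IsUnit (Fᵀ * G).det := by
    have h : Fᵀ * G = (Gᵀ * F)ᵀ := by simp [Matrix.transpose_mul]
    rw [h, Matrix.det_transpose]; exact hdet
  have h1 : Gᵀ * Vggp * G = (Gᵀ * F) * (Fᵀ * G) := by
    rw [hfact]; simp [Matrix.mul_assoc]
  have hkey : A * (Gᵀ * Vggp * G)⁻¹ * Gᵀ * Vggp = cov P mβ mγ * Vggp := by
    rw [hA, h1, Matrix.mul_inv_rev, hfact]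
    calc cov P mβ mγ * (F * Fᵀ) * G * ((Fᵀ * G)⁻¹ * (Gᵀ * F)⁻¹) * Gᵀ * (F * Fᵀ)
        = cov P mβ mγ * (F * (((Fᵀ * G) * (Fᵀ * G)⁻¹) * (((Gᵀ * F)⁻¹ * (Gᵀ * F)) * Fᵀ))) := by
          simp only [Matrix.mul_assoc]
      _ = cov P mβ mγ * (F * Fᵀ) := by
          rw [Matrix.mul_nonsing_inv _ hdetT, Matrix.nonsing_inv_mul _ hdet, Matrix.one_mul,
            Matrix.one_mul]
  have hΨ : cov P mβ mγ * Vggp - A * (Gᵀ * Vggp * G)⁻¹ * Gᵀ * Vggp = 0 := by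
    rw [hkey, sub_self]
  refine ⟨by rw [hΨ, Matrix.zero_mul], Filter.Eventually.of_forall fun ω => ?_⟩
  rw [hΨ, Matrix.zero_mulVec]
end

section
/- Let P be a probability measure on ℝ with continuous density p, and for q ∈ (0,1) let β_q be the q-th quantile (P((−∞, β_q]) = q) with p(β_q) > 0. Then the Gâteaux derivative of the quantile functional at P in direction Q − P (for a probability measure Q with P((−∞,β_q]) differentiable along the path), defined by β_q(P + ε(Q−P)) differentiated at ε = 0, equals ∫ (q − 1{z ≤ β_q}) / p(β_q) dQ(z). In particular the influence function of the q-th quantile at point z is (q − 1{z ≤ β_q}) / p(β_q). -/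
open MeasureTheory

lemma mul_cont_hasDerivWithinAt {h : ℝ → ℝ} {s : Set ℝ}
    (hc : ContinuousWithinAt h s 0) :
    HasDerivWithinAt (fun ε => ε * h ε) (h 0) s 0 := by
  rw [hasDerivWithinAt_iff_tendsto_slope]
  have heq : ∀ ε ∈ s \ {(0:ℝ)}, slope (fun ε => ε * h ε) 0 ε = h ε := by
    intro ε hε
    have hne : ε ≠ 0 := hε.2
    simp [slope_def_field]
    field_simp
  have : Filter.Tendsto h (nhdsWithin 0 (s \ {0})) (nhds (h 0)) :=
    hc.mono Set.diff_subset
  exact this.congr' (by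
    filter_upwards [self_mem_nhdsWithin] with ε hε
    exact (heq ε hε).symm)

/-- Influence function of the `q`-th quantile: along the mixture path
`P + ε(Q−P)` the quantile has derivative at `ε = 0` equal to
`∫ (q − 1{z ≤ β_q})/p(β_q) dQ(z)`. -/
theorem quantile_influence_function
    (P Q : Measure ℝ) [IsProbabilityMeasure P] [IsProbabilityMeasure Q]
    (p : ℝ → ℝ) (q : ℝ) (hq : q ∈ Set.Ioo (0 : ℝ) 1)
    (hP : ∀ t, HasDerivAt (fun s => (P (Set.Iic s)).toReal) (p t) t)
    (hpc : Continuous p)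
    (β : ℝ → ℝ)
    (hpos : 0 < p (β 0))
    (hmom : ∀ ε ∈ Set.Icc (0 : ℝ) 1,
      (1 - ε) * (P (Set.Iic (β ε))).toReal + ε * (Q (Set.Iic (β ε))).toReal = q)
    (hβ : DifferentiableWithinAt ℝ β (Set.Icc 0 1) 0)
    (hQc : ContinuousAt (fun s => (Q (Set.Iic s)).toReal) (β 0)) :
    HasDerivWithinAt β
      (∫ z, (q - if z ≤ β 0 then (1 : ℝ) else 0) / p (β 0) ∂Q)
      (Set.Icc 0 1) 0 := by
  set f : ℝ → ℝ := fun s => (P (Set.Iic s)).toReal with hf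
  set g : ℝ → ℝ := fun s => (Q (Set.Iic s)).toReal with hg
  set d : ℝ := derivWithin β (Set.Icc 0 1) 0 with hd
  have hβd : HasDerivWithinAt β d (Set.Icc 0 1) 0 := hβ.hasDerivWithinAt
  have hud : UniqueDiffWithinAt ℝ (Set.Icc (0:ℝ) 1) 0 :=
    (uniqueDiffOn_Icc one_pos) 0 (Set.left_mem_Icc.2 zero_le_one)
  -- f (β 0) = q
  have hfq : f (β 0) = q := by
    have := hmom 0 (Set.left_mem_Icc.2 zero_le_one)
    simpa using this
  -- derivative of term1
  have h1 : HasDerivWithinAt (fun ε => (1 - ε) * f (β ε))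
      ((-1) * f (β 0) + (1 - 0) * (p (β 0) * d)) (Set.Icc 0 1) 0 := by
    have ha : HasDerivWithinAt (fun ε : ℝ => 1 - ε) (-1) (Set.Icc 0 1) 0 :=
      ((hasDerivAt_id (0:ℝ)).const_sub 1).hasDerivWithinAt
    have hb : HasDerivWithinAt (fun ε => f (β ε)) (p (β 0) * d) (Set.Icc 0 1) 0 :=
      (hP (β 0)).comp_hasDerivWithinAt 0 hβd
    exact ha.mul hb
  -- derivative of term2
  have h2 : HasDerivWithinAt (fun ε => ε * g (β ε)) (g (β 0)) (Set.Icc 0 1) 0 := by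
    have hc : ContinuousWithinAt (fun ε => g (β ε)) (Set.Icc 0 1) 0 :=
      hQc.comp_continuousWithinAt hβ.continuousWithinAt
    exact mul_cont_hasDerivWithinAt hc
  have hF : HasDerivWithinAt
      (fun ε => (1 - ε) * f (β ε) + ε * g (β ε))
      ((-1) * f (β 0) + (1 - 0) * (p (β 0) * d) + g (β 0)) (Set.Icc 0 1) 0 :=
    h1.add h2
  have hF0 : HasDerivWithinAt
      (fun ε => (1 - ε) * f (β ε) + ε * g (β ε)) 0 (Set.Icc 0 1) 0 := by
    refine (hasDerivWithinAt_const 0 (Set.Icc (0:ℝ) 1) q).congr ?_ ?_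
    · intro x hx; exact hmom x hx
    · exact hmom 0 (Set.left_mem_Icc.2 zero_le_one)
  have hDeq : (-1) * f (β 0) + (1 - 0) * (p (β 0) * d) + g (β 0) = 0 :=
    (hF.derivWithin hud).symm.trans (hF0.derivWithin hud)
  have hdval : d = (q - g (β 0)) / p (β 0) := by
    rw [hfq] at hDeq
    field_simp
    linarith
  -- compute the integral
  have hint : (∫ z, (q - if z ≤ β 0 then (1 : ℝ) else 0) / p (β 0) ∂Q)
      = (q - g (β 0)) / p (β 0) := by
    have hind : (fun z => (if z ≤ β 0 then (1:ℝ) else 0))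
        = (Set.Iic (β 0)).indicator (fun _ => (1:ℝ)) := by
      funext z
      simp [Set.indicator_apply, Set.mem_Iic]
    have hintegrable : Integrable ((Set.Iic (β 0)).indicator (fun _ => (1:ℝ))) Q :=
      (integrable_const (1:ℝ)).indicator measurableSet_Iic
    calc (∫ z, (q - if z ≤ β 0 then (1 : ℝ) else 0) / p (β 0) ∂Q)
        = (∫ z, (q - if z ≤ β 0 then (1 : ℝ) else 0) ∂Q) / p (β 0) := by
          rw [integral_div]
      _ = (q - g (β 0)) / p (β 0) := by
          congr 1
          rw [show (fun z => q - if z ≤ β 0 then (1:ℝ) else 0)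
              = fun z => q - (Set.Iic (β 0)).indicator (fun _ => (1:ℝ)) z from
            funext fun z => by simp [Set.indicator_apply, Set.mem_Iic]]
          rw [integral_sub (integrable_const q) hintegrable]
          simp [hg, integral_indicator_const, measurableSet_Iic, measure_univ]
          rfl
  rw [hint, ← hdval]
  exact hβd
end
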